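/- Let n ≥ 2 be an integer, b > 0, and C ∈ ℝ. Suppose v : ℝ → ℝ is twice continuously differentiable on (0,b) and satisfies the radial Hamiltonian stationary ODE v''(r)/(1+v'(r)^2) + (n−1)(r·v'(r) − v(r))/(r^2+v(r)^2) = C·(1+v'(r)^2)^{1/2}/(r^2+v(r)^2)^{(n−1)/2} for all r ∈ (0,b), and that v(r) → 0 as r → 0⁺. Then C = 0 and there is a constant k ∈ ℝ such that v(r) = k·r for all r ∈ (0,b); that is, the radial potential u (with u' = v) is a quadratic polynomial and its gradient graph is a flat disk. -/

import Mathlib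

/-!
Write `q = r² + v²` and `θ = arctan v' + (n - 1) arctan (v / r)` for the Lagrangian phase; the
ODE says `θ' = C √(1 + v'²) / q^((n-1)/2)`. Near `0` we have `q ≤ 1`, and Cauchy–Schwarz gives
`(log q)' / 2 = (r + v v') / q ≤ √(1 + v'²) / √q ≤ θ' / C`, so `θ / C - (log q) / 2` increases
near `0`. Since `θ` is bounded and `log q → -∞`, this forces `C = 0`.

For `C = 0` the ODE gives `((r v' - v)²)' = -2 (n - 1) r (1 + v'²) (r v' - v)² / q ≤ 0`. If
`r v' - v` did not vanish at some `r₀`, it would be `≥ c > 0` (or `≤ -c`) on `(0, r₀)`; then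
`(v + c) / r` is increasing (or `(v - c) / r` decreasing), forcing `v ≤ K r - c` (or
`v ≥ K r + c`) near `0`. Hence `(v / r)' = (r v' - v) / r² = 0`.
-/

open Set Filter Real Topology

lemma monotoneOn_of_hasDerivAt_nonneg {D : Set ℝ} (hD : Convex ℝ D)
    {f f' : ℝ → ℝ} (hf : ∀ x ∈ D, HasDerivAt f (f' x) x) (hf' : ∀ x ∈ D, 0 ≤ f' x) :
    MonotoneOn f D :=
  monotoneOn_of_hasDerivWithinAt_nonneg hD (fun x hx => (hf x hx).continuousAt.continuousWithinAt)
    (fun x hx => (hf x (interior_subset hx)).hasDerivWithinAt)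
    (fun x hx => hf' x (interior_subset hx))

lemma antitoneOn_of_hasDerivAt_nonpos {D : Set ℝ} (hD : Convex ℝ D)
    {f f' : ℝ → ℝ} (hf : ∀ x ∈ D, HasDerivAt f (f' x) x) (hf' : ∀ x ∈ D, f' x ≤ 0) :
    AntitoneOn f D :=
  antitoneOn_of_hasDerivWithinAt_nonpos hD (fun x hx => (hf x hx).continuousAt.continuousWithinAt)
    (fun x hx => (hf x (interior_subset hx)).hasDerivWithinAt)
    (fun x hx => hf' x (interior_subset hx))

lemma MonotoneOn.not_tendsto_nhdsGT_atTop {a b : ℝ} {f : ℝ → ℝ} (hab : a < b)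
    (hf : MonotoneOn f (Ioo a b)) : ¬ Tendsto f (𝓝[>] a) atTop := by
  intro htop
  obtain ⟨c, hc⟩ := exists_between hab
  obtain ⟨s, hfs, hs⟩ :=
    ((htop.eventually_gt_atTop (f c)).and (Ioo_mem_nhdsGT hc.1)).exists
  exact (hf ⟨hs.1, hs.2.trans hc.2⟩ hc hs.2.le).not_gt hfs

lemma HasDerivAt.arctan_div_self {v : ℝ → ℝ} {v' r : ℝ} (hv : HasDerivAt v v' r) (hr : r ≠ 0) :
    HasDerivAt (fun r => Real.arctan (v r / r)) ((r * v' - v r) / (r ^ 2 + v r ^ 2)) r := by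
  have hq : r ^ 2 + v r ^ 2 ≠ 0 := by positivity
  refine (hv.fun_div (hasDerivAt_id' r) hr).arctan.congr_deriv ?_
  field_simp

lemma HasDerivAt.log_sq_add_sq_div_two {v : ℝ → ℝ} {v' r : ℝ} (hv : HasDerivAt v v' r)
    (hr : r ≠ 0) :
    HasDerivAt (fun r => Real.log (r ^ 2 + v r ^ 2) / 2)
      ((r + v r * v') / (r ^ 2 + v r ^ 2)) r := by
  have hq : r ^ 2 + v r ^ 2 ≠ 0 := by positivity
  refine ((((hasDerivAt_pow 2 r).fun_add (hv.fun_pow 2)).log hq).div_const 2).congr_deriv ?_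
  field_simp
  ring

noncomputable def radialPhase (n : ℕ) (v : ℝ → ℝ) (r : ℝ) : ℝ :=
  arctan (deriv v r) + ((n : ℝ) - 1) * arctan (v r / r)

lemma hasDerivAt_radialPhase (n : ℕ) {v : ℝ → ℝ} {r : ℝ} (hr : r ≠ 0)
    (hv : HasDerivAt v (deriv v r) r) (hv' : HasDerivAt (deriv v) (deriv (deriv v) r) r) :
    HasDerivAt (radialPhase n v)
      (deriv (deriv v) r / (1 + deriv v r ^ 2)
        + ((n : ℝ) - 1) * (r * deriv v r - v r) / (r ^ 2 + v r ^ 2)) r := by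
  refine (hv'.arctan.fun_add ((hv.arctan_div_self hr).const_mul ((n : ℝ) - 1))).congr_deriv ?_
  field_simp

lemma abs_radialPhase_le {n : ℕ} (hn : 1 ≤ n) (v : ℝ → ℝ) (r : ℝ) :
    |radialPhase n v r| ≤ n * (π / 2) := by
  have hn' : (0 : ℝ) ≤ n - 1 := by
    rw [sub_nonneg]; exact_mod_cast hn
  have harctan (x : ℝ) : |arctan x| ≤ π / 2 :=
    abs_le.2 ⟨(neg_pi_div_two_lt_arctan x).le, (arctan_lt_pi_div_two x).le⟩
  calc |radialPhase n v r|
      ≤ |arctan (deriv v r)| + |(n - 1) * arctan (v r / r)| := abs_add_le _ _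
    _ = |arctan (deriv v r)| + (n - 1) * |arctan (v r / r)| := by
        rw [abs_mul, abs_of_nonneg hn']
    _ ≤ π / 2 + (n - 1) * (π / 2) := by gcongr <;> exact harctan _
    _ = n * (π / 2) := by ring

lemma add_mul_div_le_sqrt_div_sqrt_pow {r x d : ℝ} {m : ℕ} (hm : m ≠ 0)
    (hq : 0 < r ^ 2 + x ^ 2) (hq1 : r ^ 2 + x ^ 2 ≤ 1) :
    (r + x * d) / (r ^ 2 + x ^ 2) ≤ √(1 + d ^ 2) / √((r ^ 2 + x ^ 2) ^ m) := by
  set q := r ^ 2 + x ^ 2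
  calc (r + x * d) / q
      ≤ √(q * (1 + d ^ 2)) / q := by
        gcongr
        exact le_sqrt_of_sq_le (by nlinarith [sq_nonneg (r * d - x)])
    _ = √(1 + d ^ 2) / √q := by
        rw [sqrt_mul hq.le, mul_comm, mul_div_assoc, sqrt_div_self', mul_one_div]
    _ ≤ √(1 + d ^ 2) / √(q ^ m) := by
        gcongr
        exact pow_le_of_le_one hq.le hq1 hm

lemma tendsto_sq_add_sq_nhdsGT_zero {v : ℝ → ℝ} (hv : Tendsto v (𝓝[>] 0) (𝓝 0)) :
    Tendsto (fun r => r ^ 2 + v r ^ 2) (𝓝[>] 0) (𝓝[>] 0) := by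
  refine tendsto_nhdsWithin_iff.2
    ⟨?_, eventually_mem_nhdsWithin.mono fun r (hr : 0 < r) => mem_Ioi.2 (by positivity)⟩
  simpa using (((continuous_pow 2).tendsto 0).mono_left nhdsWithin_le_nhds).add (hv.pow 2)

lemma eq_zero_of_hasDerivAt_radialPhase {n : ℕ} (hn : 2 ≤ n) {b C : ℝ} (hb : 0 < b)
    {v : ℝ → ℝ}
    (hv : ∀ r ∈ Ioo 0 b, HasDerivAt v (deriv v r) r)
    (hphase : ∀ r ∈ Ioo 0 b, HasDerivAt (radialPhase n v)
      (C * √(1 + deriv v r ^ 2) / √((r ^ 2 + v r ^ 2) ^ (n - 1))) r)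
    (hlim : Tendsto v (𝓝[>] 0) (𝓝 0)) : C = 0 := by
  by_contra hC
  have hq := tendsto_sq_add_sq_nhdsGT_zero hlim
  obtain ⟨a, ha, hsub⟩ := mem_nhdsGT_iff_exists_Ioo_subset.1
    (inter_mem (Ioo_mem_nhdsGT hb) (hq (Ioo_mem_nhdsGT one_pos)))
  have hab : ∀ r ∈ Ioo 0 a, r ∈ Ioo 0 b := fun r hr => (hsub hr).1
  have hmono : MonotoneOn (fun r => radialPhase n v r / C - Real.log (r ^ 2 + v r ^ 2) / 2)
      (Ioo 0 a) := by
    refine monotoneOn_of_hasDerivAt_nonneg (convex_Ioo 0 a) (fun r hr =>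
      ((hphase r (hab r hr)).div_const C).sub ((hv r (hab r hr)).log_sq_add_sq_div_two hr.1.ne'))
      (fun r hr => ?_)
    rw [mul_div_assoc, mul_div_cancel_left₀ _ hC, sub_nonneg]
    exact add_mul_div_le_sqrt_div_sqrt_pow (by omega) (hsub hr).2.1 (hsub hr).2.2.le
  refine hmono.not_tendsto_nhdsGT_atTop ha ?_
  have hbdd (r : ℝ) : -(n * (π / 2) / |C|) ≤ radialPhase n v r / C := by
    refine neg_le_of_abs_le ?_
    rw [abs_div]
    gcongr
    exact abs_radialPhase_le (by omega) v r
  simpa only [sub_eq_add_neg, Function.comp_def] using tendsto_atTop_add_left_of_le _ _ hbdd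
    (tendsto_neg_atBot_atTop.comp ((tendsto_log_nhdsGT_zero.comp hq).atBot_div_const two_pos))

lemma antitoneOn_sq_mul_deriv_sub {m b : ℝ} {v : ℝ → ℝ} (hm : 0 ≤ m)
    (hv : ∀ r ∈ Ioo 0 b, HasDerivAt v (deriv v r) r)
    (hv' : ∀ r ∈ Ioo 0 b, HasDerivAt (deriv v) (deriv (deriv v) r) r)
    (hode : ∀ r ∈ Ioo 0 b, deriv (deriv v) r / (1 + deriv v r ^ 2)
      + m * (r * deriv v r - v r) / (r ^ 2 + v r ^ 2) = 0) :
    AntitoneOn (fun r => (r * deriv v r - v r) ^ 2) (Ioo 0 b) := by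
  refine antitoneOn_of_hasDerivAt_nonpos (convex_Ioo 0 b) (f' := fun r =>
      -(2 * m * r * (1 + deriv v r ^ 2) * (r * deriv v r - v r) ^ 2 / (r ^ 2 + v r ^ 2)))
    (fun r hr => ?_) (fun r hr => ?_)
  · have hq : r ^ 2 + v r ^ 2 ≠ 0 := by have := hr.1; positivity
    have hv'' : deriv (deriv v) r
        = -(m * (r * deriv v r - v r) * (1 + deriv v r ^ 2) / (r ^ 2 + v r ^ 2)) := by
      have h := hode r hr
      field_simp at h ⊢
      linarith
    refine ((((hasDerivAt_id' r).fun_mul (hv' r hr)).fun_sub (hv r hr)).fun_pow 2).congr_deriv ?_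
    rw [hv'']
    field_simp
    ring
  · have := hr.1
    rw [neg_nonpos]
    positivity

lemma not_tendsto_nhdsGT_zero_of_le_mul_deriv_sub {a c : ℝ} {v v' : ℝ → ℝ} (ha : 0 < a)
    (hc : 0 < c) (hv : ∀ r ∈ Ioo 0 a, HasDerivAt v (v' r) r)
    (hg : ∀ r ∈ Ioo 0 a, c ≤ r * v' r - v r) : ¬ Tendsto v (𝓝[>] 0) (𝓝 0) := by
  intro hlim
  have hmono : MonotoneOn (fun r => (v r + c) / r) (Ioo 0 a) := by
    refine monotoneOn_of_hasDerivAt_nonneg (convex_Ioo 0 a)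
      (fun r hr => ((hv r hr).add_const c).fun_div (hasDerivAt_id' r) hr.1.ne') (fun r hr => ?_)
    have := hg r hr
    apply div_nonneg _ (sq_nonneg r)
    linarith
  set K := (v (a / 2) + c) / (a / 2)
  have hle : ∀ᶠ r in 𝓝[>] 0, v r ≤ K * r - c := by
    filter_upwards [Ioo_mem_nhdsGT (half_pos ha)] with r hr
    have := hmono ⟨hr.1, hr.2.trans (half_lt_self ha)⟩ ⟨half_pos ha, half_lt_self ha⟩ hr.2.le
    rw [div_le_iff₀ hr.1] at this
    linarith
  have hK : Tendsto (fun r => K * r - c) (𝓝[>] 0) (𝓝 (-c)) := by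
    exact (Continuous.tendsto' (by fun_prop) 0 (-c) (by simp)).mono_left nhdsWithin_le_nhds
  linarith [le_of_tendsto_of_tendsto hlim hK hle]

lemma mul_deriv_eq_of_antitoneOn_sq {b : ℝ} {v v' : ℝ → ℝ}
    (hv : ∀ r ∈ Ioo 0 b, HasDerivAt v (v' r) r)
    (hg : ContinuousOn (fun r => r * v' r - v r) (Ioo 0 b))
    (hanti : AntitoneOn (fun r => (r * v' r - v r) ^ 2) (Ioo 0 b))
    (hlim : Tendsto v (𝓝[>] 0) (𝓝 0)) : ∀ r ∈ Ioo 0 b, r * v' r = v r := by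
  intro r₀ hr₀
  by_contra hne
  set g := fun r => r * v' r - v r
  have hc : 0 < |g r₀| := abs_pos.2 (sub_ne_zero.2 hne)
  have hsub : Ioo 0 r₀ ⊆ Ioo 0 b := Ioo_subset_Ioo_right hr₀.2.le
  have hlow : ∀ r ∈ Ioo 0 r₀, |g r₀| ≤ |g r| := fun r hr =>
    sq_le_sq.1 (hanti (hsub hr) hr₀ hr.2.le)
  rcases isPreconnected_Ioo.eq_or_eq_neg_of_sq_eq (hg.mono hsub) (hg.mono hsub).abs
    (fun r _ => by simp [sq_abs]) (fun hr => (hc.trans_le (hlow _ hr)).ne') with hpos | hneg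
  · exact not_tendsto_nhdsGT_zero_of_le_mul_deriv_sub hr₀.1 hc (fun r hr => hv r (hsub hr))
      (fun r hr => (hlow r hr).trans_eq (hpos hr).symm) hlim
  · refine not_tendsto_nhdsGT_zero_of_le_mul_deriv_sub hr₀.1 hc
      (fun r hr => (hv r (hsub hr)).fun_neg) (fun r hr => ?_)
      (by simpa only [neg_zero] using hlim.neg)
    have := hneg hr
    simp only [g, Pi.neg_apply] at this ⊢
    linarith [hlow r hr]

lemma exists_eq_mul_of_mul_deriv_eq {s : Set ℝ} (hs : IsOpen s) (hs' : IsPreconnected s)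
    (h0 : (0 : ℝ) ∉ s) {v v' : ℝ → ℝ} (hv : ∀ r ∈ s, HasDerivAt v (v' r) r)
    (h : ∀ r ∈ s, r * v' r = v r) : ∃ k, ∀ r ∈ s, v r = k * r := by
  have hr0 : ∀ r ∈ s, r ≠ 0 := fun r hr hr0 => h0 (hr0 ▸ hr)
  have hw : ∀ r ∈ s, HasDerivAt (fun r => v r / r) 0 r := fun r hr =>
    ((hv r hr).fun_div (hasDerivAt_id' r) (hr0 r hr)).congr_deriv (by rw [← h r hr]; ring)
  obtain ⟨k, hk⟩ := hs.exists_is_const_of_deriv_eq_zero hs'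
    (fun r hr => (hw r hr).differentiableAt.differentiableWithinAt) (fun r hr => (hw r hr).deriv)
  exact ⟨k, fun r hr => (div_eq_iff (hr0 r hr)).1 (hk r hr)⟩

/-- (First half of Theorem `two` of Chen–Warren.)
If `v` is twice continuously differentiable on `(0,b)`, solves the radial Hamiltonian
stationary ODE, and `v(r) → 0` as `r → 0⁺`, then `C = 0` and `v(r) = k r` for some
constant `k`; i.e. the radial potential `u` (with `u' = v`) is a quadratic polynomial
and its gradient graph is a flat disk. -/
theorem radial_solution_zero_limit_is_linear
    (n : ℕ) (hn : 2 ≤ n) (b C : ℝ) (hb : 0 < b)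
    (v : ℝ → ℝ) (hv : ContDiffOn ℝ 2 v (Set.Ioo 0 b))
    (hode : ∀ r ∈ Set.Ioo (0 : ℝ) b,
      deriv (deriv v) r / (1 + (deriv v r) ^ 2)
        + ((n : ℝ) - 1) * (r * deriv v r - v r) / (r ^ 2 + (v r) ^ 2)
        = C * Real.sqrt (1 + (deriv v r) ^ 2)
            / Real.sqrt ((r ^ 2 + (v r) ^ 2) ^ (n - 1)))
    (hlim : Filter.Tendsto v (nhdsWithin 0 (Set.Ioi 0)) (nhds 0)) :
    C = 0 ∧ ∃ k : ℝ, ∀ r ∈ Set.Ioo (0 : ℝ) b, v r = k * r := by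
  have hv' : ∀ r ∈ Ioo 0 b, HasDerivAt v (deriv v r) r := fun r hr =>
    ((hv.contDiffAt (isOpen_Ioo.mem_nhds hr)).differentiableAt (by norm_num)).hasDerivAt
  have hv'' : ∀ r ∈ Ioo 0 b, HasDerivAt (deriv v) (deriv (deriv v) r) r := fun r hr =>
    (((hv.deriv_of_isOpen isOpen_Ioo (m := 1) (by norm_num)).contDiffAt
      (isOpen_Ioo.mem_nhds hr)).differentiableAt one_ne_zero).hasDerivAt
  have hC : C = 0 := eq_zero_of_hasDerivAt_radialPhase hn hb hv' (fun r hr =>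
    (hasDerivAt_radialPhase n hr.1.ne' (hv' r hr) (hv'' r hr)).congr_deriv (hode r hr)) hlim
  subst hC
  have hanti := antitoneOn_sq_mul_deriv_sub (m := (n : ℝ) - 1)
    (sub_nonneg.2 (by exact_mod_cast (by omega : 1 ≤ n))) hv' hv''
    (fun r hr => by rw [hode r hr, zero_mul, zero_div])
  have hcont : ContinuousOn (fun r => r * deriv v r - v r) (Ioo 0 b) := fun r hr =>
    ((continuousAt_id.mul (hv'' r hr).continuousAt).sub (hv' r hr).continuousAt).continuousWithinAt
  exact ⟨rfl, exists_eq_mul_of_mul_deriv_eq isOpen_Ioo isPreconnected_Ioo (lt_irrefl 0 ·.1) hv'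
    (mul_deriv_eq_of_antitoneOn_sq hv' hcont hanti hlim)⟩
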